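/- Let f: R^d → R be self-concordant with minimizer x_*, H_* = ∇²f(x_*), and let B ∈ R^{d×d} be symmetric. If ‖x − x_*‖_* < 1, then ‖(B − H_*⁻¹)∇f(x)‖_* ≤ (1/2)‖B − H_*⁻¹‖²_{F(H_*)} + (1/2)·‖x − x_*‖_*²/(1 − ‖x − x_*‖_*)². -/

import Mathlib

open Matrix MeasureTheory Filter
open scoped Classical

noncomputable section

/-- Vectors in `ℝ^d` with the Euclidean (2-)norm. -/
abbrev Vec (d : ℕ) := EuclideanSpace ℝ (Fin d)

/-- Matrix square root of a positive semidefinite matrix (junk value `0` otherwise). -/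
noncomputable def msqrt {d : ℕ} (M : Matrix (Fin d) (Fin d) ℝ) : Matrix (Fin d) (Fin d) ℝ :=
  if h : M.PosSemidef then
    (h.1.eigenvectorUnitary : Matrix (Fin d) (Fin d) ℝ) *
      diagonal ((↑) ∘ Real.sqrt ∘ h.1.eigenvalues) *
      (star (h.1.eigenvectorUnitary : Matrix (Fin d) (Fin d) ℝ)) else 0

/-- Frobenius norm of a square matrix. -/
noncomputable def frobNorm {d : ℕ} (M : Matrix (Fin d) (Fin d) ℝ) : ℝ :=
  Real.sqrt (Matrix.trace (Mᵀ * M))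

/-- Weighted Frobenius norm `‖W‖_{F(H)} = ‖H^{1/2} W H^{1/2}‖_F`. -/
noncomputable def wFrob {d : ℕ} (H W : Matrix (Fin d) (Fin d) ℝ) : ℝ :=
  frobNorm (msqrt H * W * msqrt H)

/-- Local norm `‖v‖_H = √⟨H v, v⟩`. -/
noncomputable def localNorm {d : ℕ} (H : Matrix (Fin d) (Fin d) ℝ) (v : Vec d) : ℝ :=
  Real.sqrt (inner ℝ (Matrix.toEuclideanLin H v) v : ℝ)

/-- `f` is self-concordant, expressed through its Hessian map `Hf`:
the Hessian is everywhere positive definite and the local norms at nearby points are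
comparable. -/
def SelfConcordant {d : ℕ} (Hf : Vec d → Matrix (Fin d) (Fin d) ℝ) : Prop :=
  (∀ x, (Hf x).PosDef) ∧
  ∀ x y v : Vec d, localNorm (Hf x) (y - x) < 1 → v ≠ 0 →
    1 - localNorm (Hf x) (y - x) ≤ localNorm (Hf y) v / localNorm (Hf x) v ∧
      localNorm (Hf y) v / localNorm (Hf x) v ≤ 1 / (1 - localNorm (Hf x) (y - x))

/-- `g` is the gradient of `f` and `Hf` is its Hessian (the derivative of the gradient). -/
def IsGradHess {d : ℕ} (f : Vec d → ℝ) (g : Vec d → Vec d)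
    (Hf : Vec d → Matrix (Fin d) (Fin d) ℝ) : Prop :=
  (∀ x, HasGradientAt f (g x) x) ∧
  ∀ x, HasFDerivAt g (Matrix.toEuclideanCLM (𝕜 := ℝ) (Hf x) : Vec d →L[ℝ] Vec d) x

/-- Smallest eigenvalue of a symmetric matrix, via the Rayleigh quotient. -/
noncomputable def lambdaMin {d : ℕ} (M : Matrix (Fin d) (Fin d) ℝ) : ℝ :=
  ⨅ v : {v : Vec d // ‖v‖ = 1}, (inner ℝ (Matrix.toEuclideanLin M v.1) v.1 : ℝ)

/-- Entrywise expectation of a random matrix. -/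
noncomputable def expMat {Ω : Type*} [MeasurableSpace Ω] (μ : Measure Ω)
    {m n : ℕ} (M : Ω → Matrix (Fin m) (Fin n) ℝ) : Matrix (Fin m) (Fin n) ℝ :=
  Matrix.of fun i j => ∫ ω, M ω i j ∂μ

/-- The projection matrix `Z = H^{1/2} S (Sᵀ H S)⁻¹ Sᵀ H^{1/2}`. -/
noncomputable def sketchProj {d τ : ℕ} (H : Matrix (Fin d) (Fin d) ℝ)
    (S : Matrix (Fin d) (Fin τ) ℝ) : Matrix (Fin d) (Fin d) ℝ :=
  msqrt H * S * (Sᵀ * H * S)⁻¹ * Sᵀ * msqrt H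

/-- The (randomized) BFGS update
`BFGS(B, H, S) = G + (I - G H) B (I - H G)` with `G = S (Sᵀ H S)⁻¹ Sᵀ`. -/
noncomputable def bfgsUpdate {d τ : ℕ} (B H : Matrix (Fin d) (Fin d) ℝ)
    (S : Matrix (Fin d) (Fin τ) ℝ) : Matrix (Fin d) (Fin d) ℝ :=
  S * (Sᵀ * H * S)⁻¹ * Sᵀ +
    (1 - S * (Sᵀ * H * S)⁻¹ * Sᵀ * H) * B * (1 - H * (S * (Sᵀ * H * S)⁻¹ * Sᵀ))

/-- Spectral (operator 2-)norm of a matrix. -/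
noncomputable def opNorm2 {d : ℕ} (M : Matrix (Fin d) (Fin d) ℝ) : ℝ :=
  ‖(Matrix.toEuclideanCLM (𝕜 := ℝ) M : Vec d →L[ℝ] Vec d)‖

instance matrixMeasurableSpace {m n : Type*} : MeasurableSpace (Matrix m n ℝ) :=
  MeasurableSpace.pi

/-- The sketching matrices `S k` are i.i.d. samples from a common distribution `D`. -/
def IIDSketch {d τ : ℕ} {Ω : Type*} [MeasurableSpace Ω] (μ : Measure Ω)
    (S : ℕ → Ω → Matrix (Fin d) (Fin τ) ℝ) : Prop :=
  (∀ k, Measurable (S k)) ∧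
  ProbabilityTheory.iIndepFun (m := fun _ => matrixMeasurableSpace) S μ ∧
  ∀ k, Measure.map (S k) μ = Measure.map (S 0) μ

end

/-!
Write `R = H_*^{1/2}` and `W = B - H_*⁻¹`. Since `R W ∇f(x) = (R W R) (R⁻¹ ∇f(x))`, the
Frobenius norm bounds `‖W ∇f(x)‖_*` by `‖W‖_{F(H_*)} ‖R⁻¹ ∇f(x)‖`. Along the segment
`y = x_* + t (x - x_*)` the map `t ↦ R⁻¹ ∇f(y)` vanishes at `t = 0` and has derivative
`R⁻¹ H_y (x - x_*)`; self-concordance bounds its norm by `r / (1 - t r)²` with `r = ‖x - x_*‖_*`,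
which is the derivative of `r t / (1 - t r)`. Hence `‖R⁻¹ ∇f(x)‖ ≤ r / (1 - r)`, and
`ab ≤ a²/2 + b²/2` finishes.
-/

open scoped RealInnerProductSpace

lemma IsLocalMin.hasGradientAt_eq_zero {E : Type*} [NormedAddCommGroup E]
    [InnerProductSpace ℝ E] [CompleteSpace E] {f : E → ℝ} {a g' : E} (h : IsLocalMin f a)
    (hf : HasGradientAt f g' a) : g' = 0 := by
  simpa using congrArg (InnerProductSpace.toDual ℝ E).symm (h.hasFDerivAt_eq_zero hf)

lemma hasDerivAt_mul_div_one_sub_mul (r t : ℝ) (ht : 1 - t * r ≠ 0) :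
    HasDerivAt (fun s => r * s / (1 - s * r)) (r / (1 - t * r) ^ 2) t := by
  have hnum : HasDerivAt (fun s => r * s) r t := by simpa using (hasDerivAt_id t).const_mul r
  have hden : HasDerivAt (fun s => 1 - s * r) (-r) t := by
    simpa using ((hasDerivAt_id t).mul_const r).const_sub 1
  refine (hnum.div hden ht).congr_deriv ?_
  ring

lemma norm_le_div_one_sub_of_norm_deriv_le {E : Type*} [NormedAddCommGroup E] [NormedSpace ℝ E]
    {ψ ψ' : ℝ → E} {r : ℝ} (hr : r < 1) (h0 : ψ 0 = 0)
    (hψ : ∀ t ∈ Set.Icc (0 : ℝ) 1, HasDerivAt ψ (ψ' t) t)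
    (hbound : ∀ t ∈ Set.Ico (0 : ℝ) 1, ‖ψ' t‖ ≤ r / (1 - t * r) ^ 2) :
    ‖ψ 1‖ ≤ r / (1 - r) := by
  have hden : ∀ t ∈ Set.Icc (0 : ℝ) 1, 1 - t * r ≠ 0 := fun t ht => by
    nlinarith [ht.2, mul_nonneg ht.1 (sub_nonneg.2 hr.le)]
  have hbdry := fun t ht => hasDerivAt_mul_div_one_sub_mul r t (hden t ht)
  simpa using image_norm_le_of_norm_deriv_right_le_deriv_boundary'
    (fun t ht => (hψ t ht).continuousAt.continuousWithinAt)
    (fun t ht => (hψ t (Set.Ico_subset_Icc_self ht)).hasDerivWithinAt)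
    (by simp [h0]) (fun t ht => (hbdry t ht).continuousAt.continuousWithinAt)
    (fun t ht => (hbdry t (Set.Ico_subset_Icc_self ht)).hasDerivWithinAt) hbound
    (Set.right_mem_Icc.mpr zero_le_one)

section LocalNorm

variable {d : ℕ} {H : Matrix (Fin d) (Fin d) ℝ}

lemma msqrt_mul_self (h : H.PosSemidef) : msqrt H * msqrt H = H := by
  set U := (h.1.eigenvectorUnitary : Matrix (Fin d) (Fin d) ℝ)
  have hU : star U * U = 1 := Unitary.coe_star_mul_self _
  conv_rhs => rw [h.1.spectral_theorem, Unitary.conjStarAlgAut_apply]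
  rw [msqrt, dif_pos h]
  calc U * diagonal ((↑) ∘ Real.sqrt ∘ h.1.eigenvalues) * star U *
        (U * diagonal ((↑) ∘ Real.sqrt ∘ h.1.eigenvalues) * star U)
      = U * (diagonal ((↑) ∘ Real.sqrt ∘ h.1.eigenvalues) * (star U * U) *
          diagonal ((↑) ∘ Real.sqrt ∘ h.1.eigenvalues)) * star U := by
        simp only [Matrix.mul_assoc]
    _ = _ := by
        rw [hU, Matrix.mul_one, diagonal_mul_diagonal]
        congr 3
        funext i
        simp [Real.mul_self_sqrt (h.eigenvalues_nonneg i)]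

lemma posSemidef_msqrt (h : H.PosSemidef) : (msqrt H).PosSemidef := by
  rw [msqrt, dif_pos h]
  exact (posSemidef_diagonal_iff.mpr fun i => Real.sqrt_nonneg _).mul_mul_conjTranspose_same _

lemma isUnit_det_msqrt (h : H.PosDef) : IsUnit (msqrt H).det := by
  have hsq : (msqrt H).det * (msqrt H).det = H.det := by
    rw [← det_mul, msqrt_mul_self h.posSemidef]
  refine isUnit_iff_ne_zero.mpr fun h0 => h.det_pos.ne' ?_
  rw [← hsq, h0, zero_mul]

lemma toEuclideanLin_mul_apply (A B : Matrix (Fin d) (Fin d) ℝ) (v : Vec d) :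
    toEuclideanLin (A * B) v = toEuclideanLin A (toEuclideanLin B v) := by
  simp

lemma inner_toEuclideanLin_left {A : Matrix (Fin d) (Fin d) ℝ} (hA : A.IsHermitian)
    (x y : Vec d) :
    ⟪toEuclideanLin A x, y⟫ = ⟪x, toEuclideanLin A y⟫ :=
  isSymmetric_toEuclideanLin_iff.mpr hA x y

lemma localNorm_nonneg (H : Matrix (Fin d) (Fin d) ℝ) (v : Vec d) : 0 ≤ localNorm H v :=
  Real.sqrt_nonneg _

lemma localNorm_eq_norm_msqrt (h : H.PosSemidef) (v : Vec d) :
    localNorm H v = ‖toEuclideanLin (msqrt H) v‖ := by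
  rw [localNorm, ← Real.sqrt_sq (norm_nonneg (toEuclideanLin (msqrt H) v)),
    ← real_inner_self_eq_norm_sq, ← inner_toEuclideanLin_left (posSemidef_msqrt h).1,
    ← toEuclideanLin_mul_apply, msqrt_mul_self h]

lemma localNorm_smul (h : H.PosSemidef) (c : ℝ) (v : Vec d) :
    localNorm H (c • v) = |c| * localNorm H v := by
  rw [localNorm_eq_norm_msqrt h, localNorm_eq_norm_msqrt h, map_smul, norm_smul, Real.norm_eq_abs]

lemma localNorm_msqrt_inv_apply (h : H.PosDef) (v : Vec d) :
    localNorm H (toEuclideanLin (msqrt H)⁻¹ v) = ‖v‖ := by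
  rw [localNorm_eq_norm_msqrt h.posSemidef, ← toEuclideanLin_mul_apply,
    mul_nonsing_inv _ (isUnit_det_msqrt h)]
  simp

lemma localNorm_pos (h : H.PosDef) {v : Vec d} (hv : v ≠ 0) : 0 < localNorm H v := by
  rw [localNorm_eq_norm_msqrt h.posSemidef, norm_pos_iff]
  intro h0
  apply hv
  simpa [← toEuclideanLin_mul_apply, nonsing_inv_mul _ (isUnit_det_msqrt h)] using
    congrArg (toEuclideanLin (msqrt H)⁻¹) h0

lemma inner_le_localNorm_mul_localNorm (h : H.PosSemidef) (u w : Vec d) :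
    ⟪toEuclideanLin H u, w⟫ ≤ localNorm H u * localNorm H w := by
  rw [localNorm_eq_norm_msqrt h, localNorm_eq_norm_msqrt h]
  conv_lhs => rw [← msqrt_mul_self h, toEuclideanLin_mul_apply,
    inner_toEuclideanLin_left (posSemidef_msqrt h).1]
  exact real_inner_le_norm _ _

section Frobenius

attribute [local instance] Matrix.frobeniusSeminormedAddCommGroup

lemma frobNorm_eq_norm (M : Matrix (Fin d) (Fin d) ℝ) : frobNorm M = ‖M‖ := by
  have htr : (Mᵀ * M).trace = ∑ i, ∑ j, M i j ^ 2 := by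
    simp only [trace, diag, mul_apply, transpose_apply, ← sq]
    exact Finset.sum_comm
  simp [frobNorm, frobenius_norm_def, htr, Real.sqrt_eq_rpow]

lemma norm_toEuclideanLin_le_frobNorm_mul (M : Matrix (Fin d) (Fin d) ℝ) (v : Vec d) :
    ‖toEuclideanLin M v‖ ≤ frobNorm M * ‖v‖ := by
  -- `frobenius_norm_replicateCol` is stated for the `Unique.fintype` instance on `Fin 1`
  have hcol (w : Fin d → ℝ) : ‖replicateCol (Fin 1) w‖ = ‖WithLp.toLp 2 w‖ := by
    convert frobenius_norm_replicateCol (ι := Fin 1) w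
  have h := frobenius_norm_mul M (replicateCol (Fin 1) (WithLp.ofLp v))
  rwa [← replicateCol_mulVec, hcol, hcol, WithLp.toLp_ofLp, ← frobNorm_eq_norm] at h

end Frobenius

lemma localNorm_toEuclideanLin_le_wFrob_mul (h : H.PosDef) (W : Matrix (Fin d) (Fin d) ℝ)
    (v : Vec d) :
    localNorm H (toEuclideanLin W v) ≤ wFrob H W * ‖toEuclideanLin (msqrt H)⁻¹ v‖ := by
  have hRWR : toEuclideanLin (msqrt H) (toEuclideanLin W v) =
      toEuclideanLin (msqrt H * W * msqrt H) (toEuclideanLin (msqrt H)⁻¹ v) := by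
    rw [← toEuclideanLin_mul_apply, ← toEuclideanLin_mul_apply, Matrix.mul_assoc _ (msqrt H),
      mul_nonsing_inv _ (isUnit_det_msqrt h), Matrix.mul_one, toEuclideanLin_mul_apply]
  rw [localNorm_eq_norm_msqrt h.posSemidef, hRWR]
  exact norm_toEuclideanLin_le_frobNorm_mul _ _

lemma norm_msqrt_inv_mul_apply_le {K : Matrix (Fin d) (Fin d) ℝ} (hH : H.PosDef)
    (hK : K.PosSemidef) {c : ℝ} (hc : 0 ≤ c) (hKH : ∀ v, localNorm K v ≤ c * localNorm H v)
    (u : Vec d) :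
    ‖toEuclideanLin ((msqrt H)⁻¹ * K) u‖ ≤ c ^ 2 * localNorm H u := by
  set w := toEuclideanLin ((msqrt H)⁻¹ * K) u
  have hinv : ((msqrt H)⁻¹).IsHermitian := (posSemidef_msqrt hH.posSemidef).1.inv
  have hsq : ‖w‖ ^ 2 ≤ c ^ 2 * localNorm H u * ‖w‖ :=
    calc ‖w‖ ^ 2 = ⟪toEuclideanLin K u, toEuclideanLin (msqrt H)⁻¹ w⟫ := by
          rw [← real_inner_self_eq_norm_sq, ← inner_toEuclideanLin_left hinv,
            ← toEuclideanLin_mul_apply]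
      _ ≤ localNorm K u * localNorm K (toEuclideanLin (msqrt H)⁻¹ w) :=
          inner_le_localNorm_mul_localNorm hK _ _
      _ ≤ (c * localNorm H u) * (c * ‖w‖) := by
          rw [← localNorm_msqrt_inv_apply hH w]
          exact mul_le_mul (hKH u) (hKH _) (localNorm_nonneg _ _)
            (mul_nonneg hc (localNorm_nonneg _ _))
      _ = c ^ 2 * localNorm H u * ‖w‖ := by ring
  rcases (norm_nonneg w).eq_or_lt with hw | hw
  · rw [← hw]; exact mul_nonneg (sq_nonneg c) (localNorm_nonneg _ _)
  · nlinarith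

lemma SelfConcordant.localNorm_le {Hf : Vec d → Matrix (Fin d) (Fin d) ℝ}
    (hsc : SelfConcordant Hf)
    {x y : Vec d} (hxy : localNorm (Hf x) (y - x) < 1) (v : Vec d) :
    localNorm (Hf y) v ≤ (1 - localNorm (Hf x) (y - x))⁻¹ * localNorm (Hf x) v := by
  rcases eq_or_ne v 0 with rfl | hv
  · simp [localNorm]
  · have hgap : 0 < 1 - localNorm (Hf x) (y - x) := by linarith
    have hratio := (hsc.2 x y v hxy hv).2
    rw [div_le_div_iff₀ (localNorm_pos (hsc.1 x) hv) hgap, one_mul, mul_comm] at hratio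
    exact (le_inv_mul_iff₀ hgap).mpr hratio

lemma SelfConcordant.norm_msqrt_inv_apply_le {Hf : Vec d → Matrix (Fin d) (Fin d) ℝ}
    {g : Vec d → Vec d} (hsc : SelfConcordant Hf)
    (hg : ∀ x, HasFDerivAt g (toEuclideanCLM (𝕜 := ℝ) (Hf x) : Vec d →L[ℝ] Vec d) x)
    {xstar x : Vec d} (hg0 : g xstar = 0) (hx : localNorm (Hf xstar) (x - xstar) < 1) :
    ‖toEuclideanLin (msqrt (Hf xstar))⁻¹ (g x)‖ ≤
      localNorm (Hf xstar) (x - xstar) / (1 - localNorm (Hf xstar) (x - xstar)) := by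
  set H := Hf xstar
  set u := x - xstar
  set r := localNorm H u
  set Q := toEuclideanCLM (𝕜 := ℝ) (msqrt H)⁻¹
  have hψ : ∀ t : ℝ, HasDerivAt (fun s : ℝ => Q (g (xstar + s • u)))
      (Q (toEuclideanCLM (𝕜 := ℝ) (Hf (xstar + t • u)) u)) t := fun t => by
    have hline : HasDerivAt (fun s : ℝ => xstar + s • u) u t := by
      simpa using ((hasDerivAt_id t).smul_const u).const_add xstar
    exact Q.hasFDerivAt.comp_hasDerivAt t ((hg _).comp_hasDerivAt t hline)
  have hbound : ∀ t ∈ Set.Ico (0 : ℝ) 1,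
      ‖Q (toEuclideanCLM (𝕜 := ℝ) (Hf (xstar + t • u)) u)‖ ≤ r / (1 - t * r) ^ 2 := by
    intro t ht
    have hdist : localNorm H (xstar + t • u - xstar) = t * r := by
      rw [add_sub_cancel_left, localNorm_smul (hsc.1 xstar).posSemidef, abs_of_nonneg ht.1]
    have htr : t * r < 1 := by nlinarith [ht.1, ht.2]
    have hcmp := hsc.localNorm_le (hdist ▸ htr)
    rw [hdist] at hcmp
    have h := norm_msqrt_inv_mul_apply_le (hsc.1 xstar) (hsc.1 _).posSemidef
      (inv_nonneg.mpr (by linarith)) hcmp u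
    rwa [inv_pow, inv_mul_eq_div, toEuclideanLin_mul_apply] at h
  have hend := norm_le_div_one_sub_of_norm_deriv_le hx (by simp [hg0])
    (fun t _ => hψ t) hbound
  rwa [one_smul, add_sub_cancel] at hend

end LocalNorm

theorem quasi_newton_direction_error_bound_general
    {d : ℕ} (f : Vec d → ℝ) (g : Vec d → Vec d) (Hf : Vec d → Matrix (Fin d) (Fin d) ℝ)
    (hfgH : IsGradHess f g Hf) (hsc : SelfConcordant Hf)
    (xstar : Vec d) (hmin : ∀ y, f xstar ≤ f y)
    (B : Matrix (Fin d) (Fin d) ℝ)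
    (x : Vec d) (hx : localNorm (Hf xstar) (x - xstar) < 1) :
    localNorm (Hf xstar) (Matrix.toEuclideanLin (B - (Hf xstar)⁻¹) (g x)) ≤
      1 / 2 * wFrob (Hf xstar) (B - (Hf xstar)⁻¹) ^ 2 +
        1 / 2 * (localNorm (Hf xstar) (x - xstar) ^ 2 /
          (1 - localNorm (Hf xstar) (x - xstar)) ^ 2) := by
  set a := wFrob (Hf xstar) (B - (Hf xstar)⁻¹)
  set r := localNorm (Hf xstar) (x - xstar)
  have hloc : IsLocalMin f xstar := Filter.Eventually.of_forall hmin
  have hg0 : g xstar = 0 := hloc.hasGradientAt_eq_zero (hfgH.1 xstar)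
  have hgrad := hsc.norm_msqrt_inv_apply_le hfgH.2 hg0 hx
  have ha : 0 ≤ a := Real.sqrt_nonneg _
  calc localNorm (Hf xstar) (toEuclideanLin (B - (Hf xstar)⁻¹) (g x))
      ≤ a * ‖toEuclideanLin (msqrt (Hf xstar))⁻¹ (g x)‖ :=
        localNorm_toEuclideanLin_le_wFrob_mul (hsc.1 xstar) _ _
    _ ≤ a * (r / (1 - r)) := mul_le_mul_of_nonneg_left hgrad ha
    _ ≤ 1 / 2 * a ^ 2 + 1 / 2 * (r ^ 2 / (1 - r) ^ 2) := by
        rw [← div_pow]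
        linarith [two_mul_le_add_sq a (r / (1 - r))]

/-- **Bound on `‖(B - H_*⁻¹) ∇f(x)‖_*` for self-concordant `f`.** -/
theorem quasi_newton_direction_error_bound
    {d : ℕ} (f : Vec d → ℝ) (g : Vec d → Vec d) (Hf : Vec d → Matrix (Fin d) (Fin d) ℝ)
    (hfgH : IsGradHess f g Hf) (hsc : SelfConcordant Hf)
    (xstar : Vec d) (hmin : ∀ y, f xstar ≤ f y)
    (B : Matrix (Fin d) (Fin d) ℝ) (hB : B.IsSymm)
    (x : Vec d) (hx : localNorm (Hf xstar) (x - xstar) < 1) :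
    localNorm (Hf xstar) (Matrix.toEuclideanLin (B - (Hf xstar)⁻¹) (g x)) ≤
      1 / 2 * wFrob (Hf xstar) (B - (Hf xstar)⁻¹) ^ 2 +
        1 / 2 * (localNorm (Hf xstar) (x - xstar) ^ 2 /
          (1 - localNorm (Hf xstar) (x - xstar)) ^ 2) :=
  quasi_newton_direction_error_bound_general f g Hf hfgH hsc xstar hmin B x hx
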